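/- Let g and h be completely multiplicative arithmetic functions and f = g * h. Then for all positive integers n_1, n_2, n_3: f(n_1 n_2 n_3) = ∑_{a_1 | n_1, a_2 | n_2, a_3 | n_3} f(n_1/a_1) f(n_2/a_2) f(n_3/a_3) ψ(a_1, a_2, a_3), where ψ is the three-variable multiplicative function with ψ(1,1,1) = 1, ψ(p,p,1) = ψ(p,1,p) = ψ(1,p,p) = −g(p)h(p), ψ(p,p,p) = g(p)h(p)f(p), and ψ(p^{ν_1}, p^{ν_2}, p^{ν_3}) = 0 for all other prime-power triples with ν_1 + ν_2 + ν_3 ≥ 1. -/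

import Mathlib

/-!
Write `x = g p`, `y = h p`. At a prime `p`, `f (p ^ k) = ∑_{i ≤ k} x ^ i y ^ (k - i) = u (k + 1)`,
where `u` is the Lucas sequence with `u 0 = 0`, `u 1 = 1` and `u (n + 2) = s u (n + 1) - q u n`,
`s = x + y = f p`, `q = x y`. Both sides of the identity are multiplicative functions of
`(n₁, n₂, n₃)`, so it suffices to compare them on prime-power triples `(p ^ e₁, p ^ e₂, p ^ e₃)`.
There `ψ` only sees exponents `≤ 1`, and the right-hand side becomes
`u (e₁+1) u (e₂+1) u (e₃+1) - q (u e₁ u e₂ u (e₃+1) + u e₁ u (e₂+1) u e₃ + u (e₁+1) u e₂ u e₃)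
  + q s u e₁ u e₂ u e₃`,
which is `u (e₁ + e₂ + e₃ + 1)` by iterating the addition formula
`u (m + n + 1) = u (m + 1) u (n + 1) - q u m u n`.
-/

open Finset

theorem Nat.Coprime.sum_divisors_mul_eq_sum_sum {M : Type*} [AddCommMonoid M] {m n : ℕ}
    (hmn : m.Coprime n) (t : ℕ → M) :
    ∑ d ∈ (m * n).divisors, t d = ∑ b ∈ m.divisors, ∑ c ∈ n.divisors, t (b * c) := by
  rw [Nat.divisors_mul, Finset.mul_def, sum_image hmn.mul_injOn_divisors, sum_product]

theorem Nat.Coprime.coprime_mul_mul_of_dvd {m₁ m₂ m₃ n₁ n₂ n₃ b₁ b₂ b₃ c₁ c₂ c₃ : ℕ}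
    (h : (m₁ * m₂ * m₃).Coprime (n₁ * n₂ * n₃)) (hb₁ : b₁ ∣ m₁) (hb₂ : b₂ ∣ m₂) (hb₃ : b₃ ∣ m₃)
    (hc₁ : c₁ ∣ n₁) (hc₂ : c₂ ∣ n₂) (hc₃ : c₃ ∣ n₃) : (b₁ * b₂ * b₃).Coprime (c₁ * c₂ * c₃) :=
  (h.coprime_dvd_left (mul_dvd_mul (mul_dvd_mul hb₁ hb₂) hb₃)).coprime_dvd_right
    (mul_dvd_mul (mul_dvd_mul hc₁ hc₂) hc₃)

theorem Nat.Coprime.of_mul_mul {m₁ m₂ m₃ n₁ n₂ n₃ : ℕ}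
    (h : (m₁ * m₂ * m₃).Coprime (n₁ * n₂ * n₃)) :
    m₁.Coprime n₁ ∧ m₂.Coprime n₂ ∧ m₃.Coprime n₃ := by
  simp only [Nat.coprime_mul_iff_left, Nat.coprime_mul_iff_right] at h
  tauto

theorem sum_range_eq_sum_range_of_eq_zero {M : Type*} [AddCommMonoid M] {a b : ℕ} (G : ℕ → M)
    (hG : ∀ i, min a b ≤ i → G i = 0) : ∑ i ∈ range a, G i = ∑ i ∈ range b, G i := by
  have hmin : ∀ c, min a b ≤ c → ∑ i ∈ range (min a b), G i = ∑ i ∈ range c, G i := fun c hc =>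
    sum_subset (range_subset_range.2 hc) fun i _ hi => hG i (not_lt.1 (hi <| mem_range.2 ·))
  rw [← hmin a (min_le_left a b), hmin b (min_le_right a b)]

theorem Nat.Coprime.sum_divisors_mul_div {R : Type*} [CommSemiring R] {g h : ℕ → R}
    (hg : ∀ {a b}, a.Coprime b → g (a * b) = g a * g b)
    (hh : ∀ {a b}, a.Coprime b → h (a * b) = h a * h b) {m n : ℕ} (hmn : m.Coprime n) :
    ∑ d ∈ (m * n).divisors, g d * h (m * n / d) =
      (∑ d ∈ m.divisors, g d * h (m / d)) * ∑ d ∈ n.divisors, g d * h (n / d) := by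
  rw [hmn.sum_divisors_mul_eq_sum_sum, sum_mul_sum]
  refine sum_congr rfl fun b hb => sum_congr rfl fun c hc => ?_
  rw [Nat.mem_divisors] at hb hc
  have hbc : b.Coprime c := (hmn.coprime_dvd_left hb.1).coprime_dvd_right hc.1
  have hquot : (m / b).Coprime (n / c) :=
    (hmn.coprime_dvd_left (Nat.div_dvd_of_dvd hb.1)).coprime_dvd_right (Nat.div_dvd_of_dvd hc.1)
  rw [← Nat.div_mul_div_comm hb.1 hc.1, hg hbc, hh hquot]
  ring

section ThreeVariables

variable {R : Type*}

def IsMultiplicative₃ [Mul R] (Φ : ℕ → ℕ → ℕ → R) : Prop :=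
  ∀ m₁ m₂ m₃ n₁ n₂ n₃ : ℕ, (m₁ * m₂ * m₃).Coprime (n₁ * n₂ * n₃) →
    Φ (m₁ * n₁) (m₂ * n₂) (m₃ * n₃) = Φ m₁ m₂ m₃ * Φ n₁ n₂ n₃

def divisorConv₃ [CommSemiring R] (Φ Ψ : ℕ → ℕ → ℕ → R) (n₁ n₂ n₃ : ℕ) : R :=
  ∑ a₁ ∈ n₁.divisors, ∑ a₂ ∈ n₂.divisors, ∑ a₃ ∈ n₃.divisors,
    Φ (n₁ / a₁) (n₂ / a₂) (n₃ / a₃) * Ψ a₁ a₂ a₃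

theorem isMultiplicative₃_apply_mul_mul [CommMonoid R] {f : ℕ → R}
    (hf : ∀ {a b}, a.Coprime b → f (a * b) = f a * f b) :
    IsMultiplicative₃ fun n₁ n₂ n₃ => f (n₁ * n₂ * n₃) := by
  intro m₁ m₂ m₃ n₁ n₂ n₃ hmn
  dsimp only
  rw [← hf hmn]
  congr 1
  ring

theorem isMultiplicative₃_apply_mul_apply_mul_apply [CommMonoid R] {f : ℕ → R}
    (hf : ∀ {a b}, a.Coprime b → f (a * b) = f a * f b) :
    IsMultiplicative₃ fun n₁ n₂ n₃ => f n₁ * f n₂ * f n₃ := by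
  intro m₁ m₂ m₃ n₁ n₂ n₃ hmn
  obtain ⟨h₁, h₂, h₃⟩ := hmn.of_mul_mul
  simp only [hf h₁, hf h₂, hf h₃]
  ac_rfl

theorem IsMultiplicative₃.divisorConv₃ [CommSemiring R] {Φ Ψ : ℕ → ℕ → ℕ → R}
    (hΦ : IsMultiplicative₃ Φ) (hΨ : IsMultiplicative₃ Ψ) :
    IsMultiplicative₃ (divisorConv₃ Φ Ψ) := by
  intro m₁ m₂ m₃ n₁ n₂ n₃ hmn
  obtain ⟨h₁, h₂, h₃⟩ := hmn.of_mul_mul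
  simp only [_root_.divisorConv₃, h₁.sum_divisors_mul_eq_sum_sum, h₂.sum_divisors_mul_eq_sum_sum,
    h₃.sum_divisors_mul_eq_sum_sum, sum_mul_sum]
  refine sum_congr rfl fun b₁ hb₁ => sum_congr rfl fun c₁ hc₁ =>
    sum_congr rfl fun b₂ hb₂ => sum_congr rfl fun c₂ hc₂ =>
    sum_congr rfl fun b₃ hb₃ => sum_congr rfl fun c₃ hc₃ => ?_
  simp only [Nat.mem_divisors] at hb₁ hb₂ hb₃ hc₁ hc₂ hc₃
  rw [← Nat.div_mul_div_comm hb₁.1 hc₁.1, ← Nat.div_mul_div_comm hb₂.1 hc₂.1,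
    ← Nat.div_mul_div_comm hb₃.1 hc₃.1,
    hΦ _ _ _ _ _ _ (hmn.coprime_mul_mul_of_dvd (Nat.div_dvd_of_dvd hb₁.1)
      (Nat.div_dvd_of_dvd hb₂.1) (Nat.div_dvd_of_dvd hb₃.1) (Nat.div_dvd_of_dvd hc₁.1)
      (Nat.div_dvd_of_dvd hc₂.1) (Nat.div_dvd_of_dvd hc₃.1)),
    hΨ _ _ _ _ _ _ (hmn.coprime_mul_mul_of_dvd hb₁.1 hb₂.1 hb₃.1 hc₁.1 hc₂.1 hc₃.1)]
  ring

theorem IsMultiplicative₃.eq_of_prime_pow [Mul R] {Φ Ψ : ℕ → ℕ → ℕ → R}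
    (hΦ : IsMultiplicative₃ Φ) (hΨ : IsMultiplicative₃ Ψ)
    (h : ∀ p, p.Prime → ∀ e₁ e₂ e₃, Φ (p ^ e₁) (p ^ e₂) (p ^ e₃) = Ψ (p ^ e₁) (p ^ e₂) (p ^ e₃))
    {n₁ n₂ n₃ : ℕ} (hn₁ : 0 < n₁) (hn₂ : 0 < n₂) (hn₃ : 0 < n₃) :
    Φ n₁ n₂ n₃ = Ψ n₁ n₂ n₃ := by
  induction hN : n₁ * n₂ * n₃ using Nat.strong_induction_on generalizing n₁ n₂ n₃ with
  | _ N ih =>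
  by_cases hN1 : N = 1
  · obtain ⟨⟨rfl, rfl⟩, rfl⟩ : (n₁ = 1 ∧ n₂ = 1) ∧ n₃ = 1 := by simpa [hN1] using hN
    simpa using h 2 Nat.prime_two 0 0 0
  obtain ⟨p, hp, hpN⟩ := Nat.exists_prime_and_dvd hN1
  obtain ⟨e₁, m₁, hp₁, rfl⟩ := Nat.exists_eq_pow_mul_and_not_dvd hn₁.ne' p hp.ne_one
  obtain ⟨e₂, m₂, hp₂, rfl⟩ := Nat.exists_eq_pow_mul_and_not_dvd hn₂.ne' p hp.ne_one
  obtain ⟨e₃, m₃, hp₃, rfl⟩ := Nat.exists_eq_pow_mul_and_not_dvd hn₃.ne' p hp.ne_one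
  have hpm : ¬ p ∣ m₁ * m₂ * m₃ := by simp only [hp.dvd_mul]; tauto
  have hcop : (p ^ e₁ * p ^ e₂ * p ^ e₃).Coprime (m₁ * m₂ * m₃) := by
    have := (hp.coprime_iff_not_dvd.2 hpm).pow_left
    exact ((this e₁).mul_left (this e₂)).mul_left (this e₃)
  have hmN : m₁ * m₂ * m₃ < N := by
    subst hN
    exact lt_of_le_of_ne (Nat.le_of_dvd (by positivity) (Dvd.intro (p ^ e₁ * p ^ e₂ * p ^ e₃)
      (by ring))) fun h => hpm (h ▸ hpN)
  rw [hΦ _ _ _ _ _ _ hcop, hΨ _ _ _ _ _ _ hcop, h p hp,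
    ih _ hmN (Nat.pos_of_mul_pos_left hn₁) (Nat.pos_of_mul_pos_left hn₂)
      (Nat.pos_of_mul_pos_left hn₃) rfl]

end ThreeVariables

section Lucas

variable {R : Type*} [CommRing R]

structure IsLucasSequence (s q : R) (u : ℕ → R) : Prop where
  zero : u 0 = 0
  one : u 1 = 1
  add_two : ∀ n, u (n + 2) = s * u (n + 1) - q * u n

theorem isLucasSequence_geom_sum₂ (x y : R) :
    IsLucasSequence (x + y) (x * y) fun n => ∑ i ∈ range n, x ^ i * y ^ (n - 1 - i) where
  zero := by simp
  one := by simp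
  add_two n := by
    have h₁ := geom_sum₂_succ_eq x y (n := n + 1)
    have h₀ := geom_sum₂_succ_eq x y (n := n)
    show ∑ i ∈ range (n + 1 + 1), x ^ i * y ^ (n + 1 + 1 - 1 - i) =
      (x + y) * ∑ i ∈ range (n + 1), x ^ i * y ^ (n + 1 - 1 - i)
        - x * y * ∑ i ∈ range n, x ^ i * y ^ (n - 1 - i)
    simp only [Nat.add_sub_cancel] at h₁ ⊢
    linear_combination h₁ - x * h₀

namespace IsLucasSequence

variable {s q : R} {u : ℕ → R}

theorem add_add_one (hu : IsLucasSequence s q u) (m n : ℕ) :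
    u (m + n + 1) = u (m + 1) * u (n + 1) - q * u m * u n := by
  induction n generalizing m with
  | zero => simp [hu.zero, hu.one]
  | succ n ih =>
    rw [show m + (n + 1) + 1 = m + 1 + n + 1 by ring, ih, hu.add_two, hu.add_two]
    ring

theorem add (hu : IsLucasSequence s q u) (m n : ℕ) :
    u (m + n) = u (m + 1) * u n + u m * u (n + 1) - s * u m * u n := by
  cases n with
  | zero => simp [hu.zero, hu.one]
  | succ n => rw [← add_assoc, hu.add_add_one, hu.add_two]; ring

theorem add_add_add_one (hu : IsLucasSequence s q u) (l m n : ℕ) :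
    u (l + m + n + 1) = u (l + 1) * u (m + 1) * u (n + 1)
      - q * (u l * u m * u (n + 1) + u l * u (m + 1) * u n + u (l + 1) * u m * u n)
      + q * s * (u l * u m * u n) := by
  linear_combination hu.add_add_one (l + m) n + u (n + 1) * hu.add_add_one l m
    - q * u n * hu.add l m

theorem eq_sum_range_mul (hu : IsLucasSequence s q u) (c : ℕ → ℕ → ℕ → R)
    (hc₀ : c 0 0 0 = 1) (hc₁₁₀ : c 1 1 0 = -q) (hc₁₀₁ : c 1 0 1 = -q) (hc₀₁₁ : c 0 1 1 = -q)
    (hc₁₁₁ : c 1 1 1 = q * s)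
    (hc : ∀ i j k, 2 ≤ i ∨ 2 ≤ j ∨ 2 ≤ k ∨ i + j + k = 1 → c i j k = 0) (e₁ e₂ e₃ : ℕ) :
    u (e₁ + e₂ + e₃ + 1) = ∑ i ∈ range (e₁ + 1), ∑ j ∈ range (e₂ + 1), ∑ k ∈ range (e₃ + 1),
      u (e₁ + 1 - i) * u (e₂ + 1 - j) * u (e₃ + 1 - k) * c i j k := by
  -- `u 0 = 0` kills the terms with `i > e₁` (truncated subtraction), so every range can be
  -- cut down to `range 2`, whatever the exponents.
  have hz : ∀ i j k, min 2 (e₁ + 1) ≤ i ∨ min 2 (e₂ + 1) ≤ j ∨ min 2 (e₃ + 1) ≤ k →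
      u (e₁ + 1 - i) * u (e₂ + 1 - j) * u (e₃ + 1 - k) * c i j k = 0 := by
    intro i j k hijk
    rcases (by omega : 2 ≤ i ∨ 2 ≤ j ∨ 2 ≤ k ∨ e₁ + 1 ≤ i ∨ e₂ + 1 ≤ j ∨ e₃ + 1 ≤ k)
      with h | h | h | h | h | h
    all_goals first
      | simp [hc i j k (by omega)]
      | simp [Nat.sub_eq_zero_of_le h, hu.zero]
  calc u (e₁ + e₂ + e₃ + 1)
      = ∑ i ∈ range 2, ∑ j ∈ range 2, ∑ k ∈ range 2,
          u (e₁ + 1 - i) * u (e₂ + 1 - j) * u (e₃ + 1 - k) * c i j k := by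
        simp only [sum_range_succ, sum_range_zero, zero_add, Nat.sub_zero, Nat.add_sub_cancel,
          hc₀, hc₁₁₀, hc₁₀₁, hc₀₁₁, hc₁₁₁, hc 1 0 0 (by omega), hc 0 1 0 (by omega),
          hc 0 0 1 (by omega)]
        linear_combination hu.add_add_add_one e₁ e₂ e₃
    _ = _ := by
        rw [sum_range_eq_sum_range_of_eq_zero (b := e₁ + 1) _ fun i hi =>
          sum_eq_zero fun j _ => sum_eq_zero fun k _ => hz i j k (.inl hi)]
        refine sum_congr rfl fun i _ => ?_
        rw [sum_range_eq_sum_range_of_eq_zero (b := e₂ + 1) _ fun j hj =>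
          sum_eq_zero fun k _ => hz i j k (.inr (.inl hj))]
        refine sum_congr rfl fun j _ => ?_
        exact sum_range_eq_sum_range_of_eq_zero _ fun k hk => hz i j k (.inr (.inr hk))

end IsLucasSequence

end Lucas

theorem sum_divisors_prime_pow_mul_div {R : Type*} [CommSemiring R] {g h : ℕ → R}
    (hg1 : g 1 = 1) (hg : ∀ m n, g (m * n) = g m * g n)
    (hh1 : h 1 = 1) (hh : ∀ m n, h (m * n) = h m * h n) {p : ℕ} (hp : p.Prime) (k : ℕ) :
    ∑ d ∈ (p ^ k).divisors, g d * h (p ^ k / d) = ∑ i ∈ range (k + 1), g p ^ i * h p ^ (k - i) := by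
  have hg_pow : ∀ i, g (p ^ i) = g p ^ i := map_pow (⟨⟨g, hg1⟩, hg⟩ : ℕ →* R) p
  have hh_pow : ∀ i, h (p ^ i) = h p ^ i := map_pow (⟨⟨h, hh1⟩, hh⟩ : ℕ →* R) p
  rw [Nat.sum_divisors_prime_pow hp]
  refine sum_congr rfl fun i hi => ?_
  rw [Nat.pow_div (Nat.lt_succ_iff.1 (mem_range.1 hi)) hp.pos, hg_pow, hh_pow]

theorem busche_ramanujan_three_vars (g h f : ℕ → ℂ)
    (hg1 : g 1 = 1) (hg : ∀ m n : ℕ, g (m * n) = g m * g n)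
    (hh1 : h 1 = 1) (hh : ∀ m n : ℕ, h (m * n) = h m * h n)
    (hf : ∀ n : ℕ, f n = ∑ d ∈ n.divisors, g d * h (n / d))
    (ψ : ℕ → ℕ → ℕ → ℂ)
    (hψmul : ∀ m₁ m₂ m₃ n₁ n₂ n₃ : ℕ, Nat.gcd (m₁ * m₂ * m₃) (n₁ * n₂ * n₃) = 1 →
      ψ (m₁ * n₁) (m₂ * n₂) (m₃ * n₃) = ψ m₁ m₂ m₃ * ψ n₁ n₂ n₃)
    (hψ1 : ψ 1 1 1 = 1)
    (hψa : ∀ p : ℕ, p.Prime → ψ p p 1 = -(g p * h p))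
    (hψb : ∀ p : ℕ, p.Prime → ψ p 1 p = -(g p * h p))
    (hψc : ∀ p : ℕ, p.Prime → ψ 1 p p = -(g p * h p))
    (hψd : ∀ p : ℕ, p.Prime → ψ p p p = g p * h p * f p)
    (hψ0 : ∀ p : ℕ, p.Prime → ∀ ν₁ ν₂ ν₃ : ℕ, 1 ≤ ν₁ + ν₂ + ν₃ →
      ¬(ν₁ = 1 ∧ ν₂ = 1 ∧ ν₃ = 0) → ¬(ν₁ = 1 ∧ ν₂ = 0 ∧ ν₃ = 1) →
      ¬(ν₁ = 0 ∧ ν₂ = 1 ∧ ν₃ = 1) → ¬(ν₁ = 1 ∧ ν₂ = 1 ∧ ν₃ = 1) →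
      ψ (p ^ ν₁) (p ^ ν₂) (p ^ ν₃) = 0)
    (n₁ n₂ n₃ : ℕ) (hn₁ : 0 < n₁) (hn₂ : 0 < n₂) (hn₃ : 0 < n₃) :
    f (n₁ * n₂ * n₃) = ∑ a₁ ∈ n₁.divisors, ∑ a₂ ∈ n₂.divisors, ∑ a₃ ∈ n₃.divisors,
      f (n₁ / a₁) * f (n₂ / a₂) * f (n₃ / a₃) * ψ a₁ a₂ a₃ := by
  have hf_mul : ∀ {a b : ℕ}, a.Coprime b → f (a * b) = f a * f b := fun hab => by
    simp only [hf]
    exact hab.sum_divisors_mul_div (fun _ => hg _ _) (fun _ => hh _ _)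
  refine IsMultiplicative₃.eq_of_prime_pow (Φ := fun n₁ n₂ n₃ => f (n₁ * n₂ * n₃))
    (Ψ := divisorConv₃ (fun n₁ n₂ n₃ => f n₁ * f n₂ * f n₃) ψ)
    (isMultiplicative₃_apply_mul_mul hf_mul)
    ((isMultiplicative₃_apply_mul_apply_mul_apply hf_mul).divisorConv₃ hψmul)
    (fun p hp e₁ e₂ e₃ => ?_) hn₁ hn₂ hn₃
  have hu := isLucasSequence_geom_sum₂ (g p) (h p)
  set u := fun n => ∑ i ∈ range n, g p ^ i * h p ^ (n - 1 - i)
  have hf_pow : ∀ k, f (p ^ k) = u (k + 1) := fun k => by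
    rw [hf, sum_divisors_prime_pow_mul_div hg1 hg hh1 hh hp]
    rfl
  have hfp : f p = g p + h p := by simpa [hu.add_two 0, hu.zero, hu.one] using hf_pow 1
  have hf_div : ∀ {e i}, i ∈ range (e + 1) → f (p ^ e / p ^ i) = u (e + 1 - i) := fun hi => by
    have := mem_range.1 hi
    rw [Nat.pow_div (by omega) hp.pos, hf_pow]
    congr 1
    omega
  simp only [← pow_add, hf_pow, divisorConv₃, Nat.sum_divisors_prime_pow hp]
  rw [hu.eq_sum_range_mul (fun i j k => ψ (p ^ i) (p ^ j) (p ^ k)) (by simpa using hψ1)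
    (by simpa using hψa p hp) (by simpa using hψb p hp) (by simpa using hψc p hp)
    (by simpa [hfp] using hψd p hp)
    (fun i j k hijk => hψ0 p hp i j k (by omega) (by omega) (by omega) (by omega) (by omega))]
  refine sum_congr rfl fun i hi => sum_congr rfl fun j hj => sum_congr rfl fun k hk => ?_
  rw [hf_div hi, hf_div hj, hf_div hk]
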